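/- arXiv:2405.14197 — 2 statements merged into one kernel-verified Lean document; each statement's English description precedes it below -/
import Mathlib

section
/- Let L be a line and C a nonsingular conic in P^2(K) intersecting transversally, and let H_1, H_2 be the tangent lines of C at the two points of L ∩ C. Then there exist nonzero constants a, b ∈ K such that H_1·H_2 = a·C + b·L^2 as homogeneous polynomials. -/
open scoped BigOperators
open MvPolynomial

/-- An entire function on a nontrivially normed field, given by an everywhere
convergent power series. -/
structure Entire (K : Type) [NontriviallyNormedField K] where
  coeff : ℕ → K
  conv : ∀ z : K, Summable fun i => ‖coeff i‖ * ‖z‖ ^ i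

variable {K : Type} [NontriviallyNormedField K]

/-- Evaluation of an entire function. -/
noncomputable def Entire.eval (φ : Entire K) (z : K) : K := ∑' i, φ.coeff i * z ^ i

/-- The Gauss norm `|φ|_r = sup_i |a_i| r^i`. -/
noncomputable def gaussNorm (φ : Entire K) (r : ℝ) : ℝ := ⨆ i, ‖φ.coeff i‖ * r ^ i

/-- The sup of `‖g z‖` over the closed disc of radius `r`. -/
noncomputable def supNorm (g : K → K) (r : ℝ) : ℝ :=
  sSup ((fun z => ‖g z‖) '' {z : K | ‖z‖ ≤ r})

/-- `‖f‖_r = max_i |f_i|_r` for a tuple of entire functions. -/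
noncomputable def heightNorm {m : ℕ} (f : Fin m → Entire K) (r : ℝ) : ℝ :=
  ⨆ i, gaussNorm (f i) r

/-- The Nevanlinna order (characteristic) function `T_f(r) = log ‖f‖_r`. -/
noncomputable def orderT {m : ℕ} (f : Fin m → Entire K) (r : ℝ) : ℝ :=
  Real.log (heightNorm f r)

/-- The vector of values of a reduced representation at a point. -/
noncomputable def fvec {m : ℕ} (f : Fin m → Entire K) (z : K) : Fin m → K :=
  fun i => (f i).eval z

/-- The proximity function `m_f(r,D) = log (‖f‖_r^d / |Q ∘ f|_r)` for the hypersurface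
defined by the homogeneous polynomial `Q` of degree `d`. -/
noncomputable def prox {m : ℕ} (f : Fin m → Entire K)
    (Q : MvPolynomial (Fin m) K) (d : ℕ) (r : ℝ) : ℝ :=
  Real.log (heightNorm f r ^ d / supNorm (fun z => MvPolynomial.eval (fvec f z) Q) r)

/-- Order of vanishing of `g` at `w`: least `k` with `g z = (z-w)^k ψ z`, `ψ` entire,
`ψ w ≠ 0`. -/
noncomputable def ordAt (g : K → K) (w : K) : ℕ :=
  sInf {k | ∃ ψ : Entire K, (∀ z, g z = (z - w) ^ k * ψ.eval z) ∧ ψ.eval w ≠ 0}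

/-- The unintegrated counting function: number of zeros (with multiplicity) in the closed
disc of radius `t`. -/
noncomputable def nCount (g : K → K) (t : ℝ) : ℕ :=
  ∑ᶠ w ∈ {w : K | ‖w‖ ≤ t}, ordAt g w

/-- The Nevanlinna counting function. -/
noncomputable def Ncount (g : K → K) (r : ℝ) : ℝ :=
  (∫ t in (0:ℝ)..r, ((nCount g t : ℝ) - (nCount g 0 : ℝ)) / t)
    + (nCount g 0 : ℝ) * Real.log r

/-- The entire functions `f 0, …, f (m-1)` have no common zero. -/
def NoCommonZeros {m : ℕ} (f : Fin m → Entire K) : Prop :=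
  ∀ z : K, ∃ i, (f i).eval z ≠ 0

/-- The analytic map `K → ℙ^{m-1}(K)` induced by a reduced representation. -/
noncomputable def projMap {m : ℕ} (f : Fin m → Entire K) (h : NoCommonZeros f) (z : K) :
    Projectivization K (Fin m → K) :=
  Projectivization.mk K (fvec f z) (by
    obtain ⟨i, hi⟩ := h z
    intro hzero
    exact hi (congrFun hzero i))

/-- The analytic map induced by `f` is nonconstant. -/
def Nonconstant {m : ℕ} (f : Fin m → Entire K) (h : NoCommonZeros f) : Prop :=
  ∃ z w : K, projMap f h z ≠ projMap f h w

/-- Gradient vector of a polynomial at a point. -/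
noncomputable def grad {m : ℕ} (Q : MvPolynomial (Fin m) K) (v : Fin m → K) : Fin m → K :=
  fun i => MvPolynomial.eval v (MvPolynomial.pderiv i Q)

/-- The (projective) tangent hyperplane of `{Q = 0}` at the point with representative `v`,
as a linear homogeneous polynomial. -/
noncomputable def tangentPoly {m : ℕ} (Q : MvPolynomial (Fin m) K) (v : Fin m → K) :
    MvPolynomial (Fin m) K :=
  ∑ i, MvPolynomial.C (MvPolynomial.eval v (MvPolynomial.pderiv i Q)) * MvPolynomial.X i

/-- Nonsingularity of the projective hypersurface `{Q = 0}` (Jacobian criterion). -/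
def Nonsingular {m : ℕ} (Q : MvPolynomial (Fin m) K) : Prop :=
  ∀ v : Fin m → K, v ≠ 0 → MvPolynomial.eval v Q = 0 → grad Q v ≠ 0

/-- Two plane curves intersect transversally. -/
def Transversal (L C : MvPolynomial (Fin 3) K) : Prop :=
  ∀ v : Fin 3 → K, v ≠ 0 → MvPolynomial.eval v L = 0 → MvPolynomial.eval v C = 0 →
    LinearIndependent K ![grad L v, grad C v]

/-- General position of `q` hypersurfaces in `ℙ^n`: for every index set `I` of cardinality
at most `n+1`, the affine cone over `∩_{i ∈ I} D_i` has Krull dimension at most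
`n + 1 - |I|` (equivalently `dim ∩_{i∈I} D_i ≤ n - |I|`, with `dim ∅ = -1`). -/
def GenPos (n q : ℕ) (Q : Fin q → MvPolynomial (Fin (n+1)) K) : Prop :=
  ∀ I : Finset (Fin q), I.card ≤ n + 1 →
    ringKrullDim (MvPolynomial (Fin (n+1)) K ⧸ Ideal.span (Q '' ↑I)) ≤ (n + 1 - I.card : ℕ)

/-- A family of hypersurfaces intersects transversally: at any common point of any
subfamily, the gradients of that subfamily are linearly independent. -/
def TransversalFamily {m q : ℕ} (Q : Fin q → MvPolynomial (Fin m) K) : Prop :=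
  ∀ (I : Finset (Fin q)) (v : Fin m → K), v ≠ 0 →
    (∀ i ∈ I, MvPolynomial.eval v (Q i) = 0) →
    LinearIndependent K (fun i : I => grad (Q i) v)

/-- `L` does not pass through a point of multiplicity `d` of the degree-`d` curve `C`:
at each point of `L ∩ C`, the tangent line of `C` meets `C` at some other point. -/
def TangentMeetsElsewhere (L C : MvPolynomial (Fin 3) K) : Prop :=
  ∀ v : Fin 3 → K, v ≠ 0 → MvPolynomial.eval v L = 0 → MvPolynomial.eval v C = 0 →
    ∃ w : Fin 3 → K, w ≠ 0 ∧ (¬ ∃ c : K, w = c • v) ∧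
      MvPolynomial.eval w (tangentPoly C v) = 0 ∧ MvPolynomial.eval w C = 0

section Helpers

variable {F : Type*} [Field F]

/-- helper monomial -/
noncomputable def m3 (a b c : ℕ) : Fin 3 →₀ ℕ :=
  Finsupp.single 0 a + Finsupp.single 1 b + Finsupp.single 2 c

lemma m3_apply0 (a b c : ℕ) : m3 a b c 0 = a := by simp [m3, Finsupp.single_apply]
lemma m3_apply1 (a b c : ℕ) : m3 a b c 1 = b := by simp [m3, Finsupp.single_apply]
lemma m3_apply2 (a b c : ℕ) : m3 a b c 2 = c := by simp [m3, Finsupp.single_apply]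

lemma m3_eq_self (d : Fin 3 →₀ ℕ) : d = m3 (d 0) (d 1) (d 2) := by
  ext i
  fin_cases i
  · simp [m3_apply0]
  · simp [m3_apply1]
  · simp [m3_apply2]

lemma m3_inj {a b c a' b' c' : ℕ} : m3 a b c = m3 a' b' c' ↔ a = a' ∧ b = b' ∧ c = c' := by
  constructor
  · intro h
    refine ⟨?_, ?_, ?_⟩
    · have := DFunLike.congr_fun h (0 : Fin 3)
      simpa [m3_apply0, m3_apply1, m3_apply2] using this
    · have := DFunLike.congr_fun h (1 : Fin 3)
      simpa [m3_apply0, m3_apply1, m3_apply2] using this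
    · have := DFunLike.congr_fun h (2 : Fin 3)
      simpa [m3_apply0, m3_apply1, m3_apply2] using this
  · rintro ⟨rfl, rfl, rfl⟩; rfl

lemma m3_degree (a b c : ℕ) : (m3 a b c).degree = a + b + c := by
  have : ∀ d : Fin 3 →₀ ℕ, d.degree = d 0 + d 1 + d 2 := by
    intro d
    rw [Finsupp.degree_apply, Finset.sum_subset (Finset.subset_univ d.support)]
    · simp [Fin.sum_univ_three]
    · intro x _ hx
      simpa using Finsupp.notMem_support_iff.mp hx
  rw [this, m3_apply0, m3_apply1, m3_apply2]

lemma lin_decomp (P : MvPolynomial (Fin 3) F) (hP : P.IsHomogeneous 1) :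
    P = monomial (m3 1 0 0) (coeff (m3 1 0 0) P) + monomial (m3 0 1 0) (coeff (m3 0 1 0) P)
      + monomial (m3 0 0 1) (coeff (m3 0 0 1) P) := by
  ext d
  obtain ⟨a, b, c, rfl⟩ : ∃ a b c, d = m3 a b c := ⟨d 0, d 1, d 2, m3_eq_self d⟩
  by_cases h2 : a + b + c = 1
  · have h : (a=1∧b=0∧c=0) ∨ (a=0∧b=1∧c=0) ∨ (a=0∧b=0∧c=1) := by omega
    rcases h with ⟨rfl,rfl,rfl⟩|⟨rfl,rfl,rfl⟩|⟨rfl,rfl,rfl⟩ <;>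
      simp [coeff_monomial, m3_inj]
  · rw [hP.coeff_eq_zero (by rw [m3_degree]; omega)]
    simp only [coeff_add, coeff_monomial, m3_inj]
    rw [if_neg (by omega), if_neg (by omega), if_neg (by omega)]
    simp

lemma quad_decomp (P : MvPolynomial (Fin 3) F) (hP : P.IsHomogeneous 2) :
    P = monomial (m3 2 0 0) (coeff (m3 2 0 0) P) + monomial (m3 0 2 0) (coeff (m3 0 2 0) P)
      + monomial (m3 0 0 2) (coeff (m3 0 0 2) P) + monomial (m3 1 1 0) (coeff (m3 1 1 0) P)
      + monomial (m3 1 0 1) (coeff (m3 1 0 1) P) + monomial (m3 0 1 1) (coeff (m3 0 1 1) P) := by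
  ext d
  obtain ⟨a, b, c, rfl⟩ : ∃ a b c, d = m3 a b c := ⟨d 0, d 1, d 2, m3_eq_self d⟩
  by_cases h2 : a + b + c = 2
  · have h : (a=2∧b=0∧c=0) ∨ (a=0∧b=2∧c=0) ∨ (a=0∧b=0∧c=2) ∨
      (a=1∧b=1∧c=0) ∨ (a=1∧b=0∧c=1) ∨ (a=0∧b=1∧c=1) := by omega
    rcases h with ⟨rfl,rfl,rfl⟩|⟨rfl,rfl,rfl⟩|⟨rfl,rfl,rfl⟩|⟨rfl,rfl,rfl⟩|⟨rfl,rfl,rfl⟩|⟨rfl,rfl,rfl⟩ <;>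
      simp [coeff_monomial, m3_inj]
  · rw [hP.coeff_eq_zero (by rw [m3_degree]; omega)]
    simp only [coeff_add, coeff_monomial, m3_inj]
    rw [if_neg (by omega), if_neg (by omega), if_neg (by omega), if_neg (by omega),
      if_neg (by omega), if_neg (by omega)]
    simp

lemma m3_sub0 (a b c : ℕ) : m3 a b c - Finsupp.single 0 1 = m3 (a-1) b c := by
  ext i
  rw [Finsupp.tsub_apply]
  fin_cases i <;>
    simp [m3_apply0, m3_apply1, m3_apply2, Finsupp.single_apply]

lemma m3_sub1 (a b c : ℕ) : m3 a b c - Finsupp.single 1 1 = m3 a (b-1) c := by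
  ext i
  rw [Finsupp.tsub_apply]
  fin_cases i <;>
    simp [m3_apply0, m3_apply1, m3_apply2, Finsupp.single_apply]

lemma m3_sub2 (a b c : ℕ) : m3 a b c - Finsupp.single 2 1 = m3 a b (c-1) := by
  ext i
  rw [Finsupp.tsub_apply]
  fin_cases i <;>
    simp [m3_apply0, m3_apply1, m3_apply2, Finsupp.single_apply]

lemma eval_m3mon (x : Fin 3 → F) (a b c : ℕ) (k : F) :
    eval x (monomial (m3 a b c) k) = k * (x 0 ^ a * x 1 ^ b * x 2 ^ c) := by
  rw [eval_monomial]
  congr 1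
  rw [Finsupp.prod_fintype _ _ (fun i => pow_zero (x i))]
  simp [Fin.prod_univ_three, m3_apply0, m3_apply1, m3_apply2]

/-- abbreviation for coefficients -/
noncomputable def cf (P : MvPolynomial (Fin 3) F) (a b c : ℕ) : F := coeff (m3 a b c) P

lemma qeval {P : MvPolynomial (Fin 3) F} (hP : P.IsHomogeneous 2) (x : Fin 3 → F) :
    eval x P = cf P 2 0 0 * x 0 ^ 2 + cf P 0 2 0 * x 1 ^ 2 + cf P 0 0 2 * x 2 ^ 2
      + cf P 1 1 0 * (x 0 * x 1) + cf P 1 0 1 * (x 0 * x 2) + cf P 0 1 1 * (x 1 * x 2) := by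
  conv_lhs => rw [quad_decomp P hP]
  simp only [map_add, eval_m3mon, cf]
  ring

lemma leval {P : MvPolynomial (Fin 3) F} (hP : P.IsHomogeneous 1) (x : Fin 3 → F) :
    eval x P = cf P 1 0 0 * x 0 + cf P 0 1 0 * x 1 + cf P 0 0 1 * x 2 := by
  conv_lhs => rw [lin_decomp P hP]
  simp only [map_add, eval_m3mon, cf]
  ring

lemma qpderiv0 {P : MvPolynomial (Fin 3) F} (hP : P.IsHomogeneous 2) (x : Fin 3 → F) :
    eval x (pderiv 0 P) = 2 * cf P 2 0 0 * x 0 + cf P 1 1 0 * x 1 + cf P 1 0 1 * x 2 := by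
  conv_lhs => rw [quad_decomp P hP]
  simp only [map_add, pderiv_monomial, m3_sub0, m3_apply0, eval_m3mon, cf]
  push_cast
  ring

lemma qpderiv1 {P : MvPolynomial (Fin 3) F} (hP : P.IsHomogeneous 2) (x : Fin 3 → F) :
    eval x (pderiv 1 P) = 2 * cf P 0 2 0 * x 1 + cf P 1 1 0 * x 0 + cf P 0 1 1 * x 2 := by
  conv_lhs => rw [quad_decomp P hP]
  simp only [map_add, pderiv_monomial, m3_sub1, m3_apply1, eval_m3mon, cf]
  push_cast
  ring

lemma qpderiv2 {P : MvPolynomial (Fin 3) F} (hP : P.IsHomogeneous 2) (x : Fin 3 → F) :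
    eval x (pderiv 2 P) = 2 * cf P 0 0 2 * x 2 + cf P 1 0 1 * x 0 + cf P 0 1 1 * x 1 := by
  conv_lhs => rw [quad_decomp P hP]
  simp only [map_add, pderiv_monomial, m3_sub2, m3_apply2, eval_m3mon, cf]
  push_cast
  ring

lemma lpderiv0 {P : MvPolynomial (Fin 3) F} (hP : P.IsHomogeneous 1) (x : Fin 3 → F) :
    eval x (pderiv 0 P) = cf P 1 0 0 := by
  conv_lhs => rw [lin_decomp P hP]
  simp only [map_add, pderiv_monomial, m3_sub0, m3_apply0, eval_m3mon, cf]
  push_cast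
  ring

lemma lpderiv1 {P : MvPolynomial (Fin 3) F} (hP : P.IsHomogeneous 1) (x : Fin 3 → F) :
    eval x (pderiv 1 P) = cf P 0 1 0 := by
  conv_lhs => rw [lin_decomp P hP]
  simp only [map_add, pderiv_monomial, m3_sub1, m3_apply1, eval_m3mon, cf]
  push_cast
  ring

lemma lpderiv2 {P : MvPolynomial (Fin 3) F} (hP : P.IsHomogeneous 1) (x : Fin 3 → F) :
    eval x (pderiv 2 P) = cf P 0 0 1 := by
  conv_lhs => rw [lin_decomp P hP]
  simp only [map_add, pderiv_monomial, m3_sub2, m3_apply2, eval_m3mon, cf]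
  push_cast
  ring

/-- polarization bilinear form -/
noncomputable def Bil (P : MvPolynomial (Fin 3) F) (x y : Fin 3 → F) : F :=
  eval (x + y) P - eval x P - eval y P

lemma Bil_symm (P : MvPolynomial (Fin 3) F) (x y : Fin 3 → F) : Bil P x y = Bil P y x := by
  rw [Bil, Bil, add_comm]
  ring

lemma Bil_eq {P : MvPolynomial (Fin 3) F} (hP : P.IsHomogeneous 2) (x y : Fin 3 → F) :
    Bil P x y = 2 * cf P 2 0 0 * x 0 * y 0 + 2 * cf P 0 2 0 * x 1 * y 1
      + 2 * cf P 0 0 2 * x 2 * y 2 + cf P 1 1 0 * (x 0 * y 1 + x 1 * y 0)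
      + cf P 1 0 1 * (x 0 * y 2 + x 2 * y 0) + cf P 0 1 1 * (x 1 * y 2 + x 2 * y 1) := by
  simp only [Bil, qeval hP, Pi.add_apply]
  ring

lemma Bil_self {P : MvPolynomial (Fin 3) F} (hP : P.IsHomogeneous 2) (x : Fin 3 → F) :
    Bil P x x = 2 * eval x P := by
  simp only [Bil_eq hP, qeval hP]
  ring

lemma Bil_lin {P : MvPolynomial (Fin 3) F} (hP : P.IsHomogeneous 2) (x y z t : Fin 3 → F)
    (α β γ : F) :
    Bil P x (α • y + β • z + γ • t)
      = α * Bil P x y + β * Bil P x z + γ * Bil P x t := by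
  simp only [Bil_eq hP, Pi.add_apply, Pi.smul_apply, smul_eq_mul]
  ring

lemma Bil_add_right {P : MvPolynomial (Fin 3) F} (hP : P.IsHomogeneous 2) (x y z : Fin 3 → F) :
    Bil P x (y + z) = Bil P x y + Bil P x z := by
  simp only [Bil_eq hP, Pi.add_apply]
  ring

lemma Bil_smul_right {P : MvPolynomial (Fin 3) F} (hP : P.IsHomogeneous 2) (x y : Fin 3 → F)
    (c : F) : Bil P x (c • y) = c * Bil P x y := by
  simp only [Bil_eq hP, Pi.smul_apply, smul_eq_mul]
  ring

lemma qv_expand {P : MvPolynomial (Fin 3) F} (hP : P.IsHomogeneous 2) (x y z : Fin 3 → F)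
    (α β γ : F) :
    eval (α • x + β • y + γ • z) P
      = α ^ 2 * eval x P + β ^ 2 * eval y P + γ ^ 2 * eval z P
        + α * β * Bil P x y + α * γ * Bil P x z + β * γ * Bil P y z := by
  simp only [Bil_eq hP, qeval hP, Pi.add_apply, Pi.smul_apply, smul_eq_mul]
  ring

lemma leval_lin {P : MvPolynomial (Fin 3) F} (hP : P.IsHomogeneous 1) (x y z : Fin 3 → F)
    (α β γ : F) :
    eval (α • x + β • y + γ • z) P = α * eval x P + β * eval y P + γ * eval z P := by
  simp only [leval hP, Pi.add_apply, Pi.smul_apply, smul_eq_mul]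
  ring

lemma leval_add {P : MvPolynomial (Fin 3) F} (hP : P.IsHomogeneous 1) (x y : Fin 3 → F) :
    eval (x + y) P = eval x P + eval y P := by
  simp only [leval hP, Pi.add_apply]
  ring

lemma leval_smul {P : MvPolynomial (Fin 3) F} (hP : P.IsHomogeneous 1) (x : Fin 3 → F) (c : F) :
    eval (c • x) P = c * eval x P := by
  simp only [leval hP, Pi.smul_apply, smul_eq_mul]
  ring

lemma leval_sub {P : MvPolynomial (Fin 3) F} (hP : P.IsHomogeneous 1) (x y : Fin 3 → F) :
    eval (x - y) P = eval x P - eval y P := by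
  simp only [leval hP, Pi.sub_apply]
  ring

lemma lin_exists_ne {P : MvPolynomial (Fin 3) F} (hP : P.IsHomogeneous 1) (h0 : P ≠ 0) :
    ∃ x : Fin 3 → F, eval x P ≠ 0 := by
  by_contra h
  push_neg at h
  apply h0
  have h0' : cf P 1 0 0 = 0 := by
    have := h (Pi.single 0 1)
    simpa [leval hP, Pi.single_apply] using this
  have h1' : cf P 0 1 0 = 0 := by
    have := h (Pi.single 1 1)
    simpa [leval hP, Pi.single_apply] using this
  have h2' : cf P 0 0 1 = 0 := by
    have := h (Pi.single 2 1)
    simpa [leval hP, Pi.single_apply] using this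
  rw [lin_decomp P hP]
  rw [show coeff (m3 1 0 0) P = cf P 1 0 0 from rfl, show coeff (m3 0 1 0) P = cf P 0 1 0 from rfl,
    show coeff (m3 0 0 1) P = cf P 0 0 1 from rfl, h0', h1', h2']
  simp

end Helpers

section KHelpers

variable {K : Type} [NontriviallyNormedField K]

lemma eval_tangent (P : MvPolynomial (Fin 3) K) (x y : Fin 3 → K) :
    eval y (tangentPoly P x)
      = eval x (pderiv 0 P) * y 0 + eval x (pderiv 1 P) * y 1 + eval x (pderiv 2 P) * y 2 := by
  simp [tangentPoly, Fin.sum_univ_three]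

lemma Bil_tangent {P : MvPolynomial (Fin 3) K} (hP : P.IsHomogeneous 2) (x y : Fin 3 → K) :
    eval y (tangentPoly P x) = Bil P x y := by
  rw [eval_tangent, Bil_eq hP, qpderiv0 hP, qpderiv1 hP, qpderiv2 hP]
  ring

lemma grad_Bil {P : MvPolynomial (Fin 3) K} (hP : P.IsHomogeneous 2) (x : Fin 3 → K)
    (i : Fin 3) : grad P x i = Bil P x (Pi.single i 1) := by
  fin_cases i <;>
    (simp [grad, Bil_eq hP, qpderiv0 hP, qpderiv1 hP, qpderiv2 hP, Pi.single_apply]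
     try ring)

lemma grad_lin {P : MvPolynomial (Fin 3) K} (hP : P.IsHomogeneous 1) (x : Fin 3 → K)
    (i : Fin 3) : grad P x i = eval (Pi.single i 1) P := by
  fin_cases i <;>
    simp [grad, lpderiv0 hP, lpderiv1 hP, lpderiv2 hP, leval hP, Pi.single_apply]


end KHelpers

/-- **Max Noether relation.** If a line `L` and a nonsingular conic `C`
meet transversally at the two points `[v], [w]`, and `H₁, H₂` are the tangent lines of
`C` there, then `H₁·H₂ = a·C + b·L²` for some nonzero constants `a, b`. -/
theorem noether_relation_conic [IsAlgClosed K]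
    (L C2 : MvPolynomial (Fin 3) K)
    (hL : L.IsHomogeneous 1) (hL0 : L ≠ 0)
    (hC : C2.IsHomogeneous 2) (hCns : Nonsingular C2)
    (htr : Transversal L C2)
    (v w : Fin 3 → K) (hv0 : v ≠ 0) (hw0 : w ≠ 0)
    (hvL : MvPolynomial.eval v L = 0) (hvC : MvPolynomial.eval v C2 = 0)
    (hwL : MvPolynomial.eval w L = 0) (hwC : MvPolynomial.eval w C2 = 0)
    (hvw : ¬ ∃ c : K, w = c • v)
    (hall : ∀ u : Fin 3 → K, u ≠ 0 → MvPolynomial.eval u L = 0 →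
      MvPolynomial.eval u C2 = 0 → (∃ c : K, u = c • v) ∨ (∃ c : K, u = c • w)) :
    ∃ a b : K, a ≠ 0 ∧ b ≠ 0 ∧
      tangentPoly C2 v * tangentPoly C2 w =
        MvPolynomial.C a * C2 + MvPolynomial.C b * L ^ 2 := by
  classical
  -- the linear form `L` as a linear map
  set lmap : (Fin 3 → K) →ₗ[K] K :=
    { toFun := fun x => eval x L
      map_add' := fun x y => leval_add hL x y
      map_smul' := fun c x => by simpa using leval_smul hL x c } with hlmap
  have hlmap_apply : ∀ x, lmap x = eval x L := fun x => rfl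
  -- a point where L takes value 1
  obtain ⟨u₀, hu₀⟩ := lin_exists_ne hL hL0
  set u : Fin 3 → K := (eval u₀ L)⁻¹ • u₀ with hu
  have hlu : eval u L = 1 := by
    rw [hu, leval_smul hL, inv_mul_cancel₀ hu₀]
  -- v, w are linearly independent
  have hli : LinearIndependent K ![w, v] := by
    rw [linearIndependent_fin2]
    refine ⟨by simpa using hv0, ?_⟩
    intro c hc
    exact hvw ⟨c, by simpa using hc.symm⟩
  -- the kernel of L is spanned by v and w
  have hspan : Submodule.span K {w, v} = LinearMap.ker lmap := by
    have hle : Submodule.span K {w, v} ≤ LinearMap.ker lmap := by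
      rw [Submodule.span_le]
      rintro x (rfl | rfl)
      · simpa [LinearMap.mem_ker, hlmap_apply] using hwL
      · simpa [LinearMap.mem_ker, hlmap_apply] using hvL
    apply Submodule.eq_of_le_of_finrank_le hle
    have h1 : Module.finrank K (Submodule.span K ({w, v} : Set (Fin 3 → K))) = 2 := by
      have hrange : Set.range ![w, v] = {w, v} := by
        rw [Set.pair_comm w v]
        simp [Matrix.range_cons, Matrix.range_empty, Set.pair_comm]
      rw [← hrange, finrank_span_eq_card hli]
      simp
    have hsurj : LinearMap.range lmap = ⊤ := by
      rw [LinearMap.range_eq_top]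
      intro c
      refine ⟨c • u, ?_⟩
      rw [hlmap_apply, leval_smul hL, hlu, mul_one]
    have h2 := LinearMap.finrank_range_add_finrank_ker lmap
    rw [hsurj, finrank_top, Module.finrank_self, Module.finrank_pi] at h2
    rw [h1]
    simp at h2
    omega
  -- decomposition of an arbitrary point
  have hdec : ∀ x : Fin 3 → K, ∃ α β : K, x = α • v + β • w + (eval x L) • u := by
    intro x
    have hxk : x - (eval x L) • u ∈ LinearMap.ker lmap := by
      rw [LinearMap.mem_ker, hlmap_apply, leval_sub hL, leval_smul hL, hlu]
      ring
    rw [← hspan, Submodule.mem_span_pair] at hxk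
    obtain ⟨β, α, hab⟩ := hxk
    refine ⟨α, β, ?_⟩
    rw [add_comm (α • v) (β • w), hab]
    abel
  set a : K := Bil C2 v w with ha_def
  have hvv : Bil C2 v v = 0 := by rw [Bil_self hC, hvC]; ring
  have hww : Bil C2 w w = 0 := by rw [Bil_self hC, hwC]; ring
  have hwv : Bil C2 w v = a := by rw [ha_def, Bil_symm]
  -- a ≠ 0, by transversality at v
  have ha : a ≠ 0 := by
    intro ha0
    have hBvx : ∀ x, Bil C2 v x = Bil C2 v u * eval x L := by
      intro x
      obtain ⟨α, β, hx⟩ := hdec x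
      set γ := eval x L with hγ
      rw [hx, Bil_lin hC, hvv, ← ha_def, ha0]
      ring
    have hgrad : grad C2 v = (Bil C2 v u) • grad L v := by
      funext i
      rw [grad_Bil hC, hBvx (Pi.single i 1), Pi.smul_apply, smul_eq_mul, grad_lin hL]
    have hli2 := htr v hv0 hvL hvC
    rw [linearIndependent_fin2] at hli2
    obtain ⟨hne, hns⟩ := hli2
    simp only [Matrix.cons_val_one, Matrix.head_cons, Matrix.cons_val_zero] at hne hns
    by_cases hc : Bil C2 v u = 0
    · exact hne (by rw [hgrad, hc, zero_smul])
    · exact hns (Bil C2 v u)⁻¹ (by rw [hgrad, smul_smul, inv_mul_cancel₀ hc, one_smul])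
  -- the main identity, pointwise
  set b : K := Bil C2 v u * Bil C2 w u - a * eval u C2 with hb_def
  have main : ∀ x, Bil C2 v x * Bil C2 w x = a * eval x C2 + b * (eval x L) ^ 2 := by
    intro x
    obtain ⟨α, β, hx⟩ := hdec x
    set γ := eval x L with hγ
    rw [hx, Bil_lin hC, Bil_lin hC, qv_expand hC, hvv, hww, hwv, ← ha_def, hvC, hwC, hb_def]
    ring
  -- b ≠ 0, by nonsingularity of C2
  have hb : b ≠ 0 := by
    intro hb0
    have hq' : ∀ x, eval x C2 = a⁻¹ * (Bil C2 v x * Bil C2 w x) := by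
      intro x
      have h := main x
      rw [hb0, zero_mul, add_zero] at h
      rw [h, inv_mul_cancel_left₀ ha]
    set f : (Fin 3 → K) →ₗ[K] K × K :=
      { toFun := fun x => (Bil C2 v x, Bil C2 w x)
        map_add' := fun x y => by
          simp [Bil_add_right hC, Prod.ext_iff]
        map_smul' := fun c x => by
          simp [Bil_smul_right hC, Prod.ext_iff, smul_eq_mul] } with hf
    have hker : LinearMap.ker f ≠ ⊥ := by
      apply LinearMap.ker_ne_bot_of_finrank_lt
      rw [Module.finrank_pi, Module.finrank_prod, Module.finrank_self]
      simp
    obtain ⟨u', hu'mem, hu'0⟩ := (Submodule.ne_bot_iff _).mp hker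
    have hpair : (Bil C2 v u', Bil C2 w u') = ((0 : K), (0 : K)) :=
      LinearMap.mem_ker.mp hu'mem
    have hv' : Bil C2 v u' = 0 := congrArg Prod.fst hpair
    have hw' : Bil C2 w u' = 0 := congrArg Prod.snd hpair
    have hqu' : eval u' C2 = 0 := by rw [hq' u', hv']; ring
    have hBu' : ∀ y, Bil C2 u' y = 0 := by
      intro y
      rw [Bil, hq' (u' + y), hq' u', hq' y, Bil_add_right hC, Bil_add_right hC, hv', hw']
      ring
    have hgrad0 : grad C2 u' = 0 := by
      funext i
      rw [grad_Bil hC]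
      simpa using hBu' (Pi.single i 1)
    exact hCns u' hu'0 hqu' hgrad0
  refine ⟨a, b, ha, hb, ?_⟩
  apply MvPolynomial.funext
  intro x
  rw [map_mul, Bil_tangent hC, Bil_tangent hC, main x]
  simp
end

section
/- Let L be a line and C a nonsingular curve of degree d ≥ 3 in P^2(K) intersecting transversally, with L not passing through any point of multiplicity d of C. Let H_1,...,H_d be the tangent lines of C at the d intersection points of L and C. Then H_1···H_d = a·C + B·L^2 for some nonzero constant a ∈ K and some homogeneous polynomial B of degree d − 2. -/
open scoped BigOperators
open MvPolynomial

variable {K : Type} [NontriviallyNormedField K]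

section NoetherAuxSection

namespace NoetherAux

variable {F : Type} [Field F]


lemma single_of_degree_one {n : ℕ} (m : Fin n →₀ ℕ) (hm : m.degree = 1) :
    ∃ i, m = Finsupp.single i 1 := by
  have h1 : ∑ i : Fin n, m i = 1 := by
    rw [← hm, Finsupp.degree]
    exact (Finset.sum_subset (Finset.subset_univ _)
      (fun x _ hx => Finsupp.notMem_support_iff.mp hx)).symm
  have hex : ∃ i, m i ≠ 0 := by
    by_contra h
    push_neg at h
    simp [h] at h1
  obtain ⟨i, hi⟩ := hex
  have hsplit : m i + ∑ j ∈ Finset.univ.erase i, m j = 1 := by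
    rw [Finset.add_sum_erase _ _ (Finset.mem_univ i)]; exact h1
  have hmi : m i = 1 := by omega
  have hrest : ∑ j ∈ Finset.univ.erase i, m j = 0 := by omega
  refine ⟨i, Finsupp.ext fun j => ?_⟩
  rcases eq_or_ne j i with rfl | hne
  · simp [hmi]
  · have : m j = 0 := by
      have := (Finset.sum_eq_zero_iff.mp hrest) j (by simp [hne])
      exact this
    simp [this, Finsupp.single_apply, Ne.symm hne]

/-- decomposition of a linear form -/
lemma linear_decomp {n : ℕ} {ℓ : MvPolynomial (Fin n) F} (hl : ℓ.IsHomogeneous 1) :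
    ℓ = ∑ i : Fin n, C (coeff (Finsupp.single i 1) ℓ) * X i := by
  ext m
  rw [coeff_sum]
  simp only [coeff_C_mul, coeff_X']
  by_cases hm : m.degree = 1
  · obtain ⟨i, rfl⟩ := single_of_degree_one m hm
    rw [Finset.sum_eq_single i]
    · simp
    · intro j _ hji
      have : ¬ (Finsupp.single j 1 = Finsupp.single i 1) := by
        intro h
        apply hji
        have := DFunLike.congr_fun h j
        simp [Finsupp.single_apply] at this
        by_contra hc
        simp [Ne.symm hc] at this
      simp [this]
    · intro h; exact absurd (Finset.mem_univ i) h
  · rw [hl.coeff_eq_zero hm]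
    symm
    apply Finset.sum_eq_zero
    intro j _
    have : ¬ (Finsupp.single j 1 = m) := by
      intro h; apply hm; rw [← h]
      simp [Finsupp.degree_single, Finsupp.support_single_ne_zero _ (by norm_num : (1:ℕ) ≠ 0)]
    simp [this]


section Subst

variable {n : ℕ} (ℓ : MvPolynomial (Fin n) F) (i0 : Fin n)

/-- substitution killing the variable `i0` modulo `ℓ` -/
noncomputable def subst : MvPolynomial (Fin n) F →ₐ[F] MvPolynomial (Fin n) F :=
  aeval (fun j => if j = i0 then X i0 - C (coeff (Finsupp.single i0 1) ℓ)⁻¹ * ℓ else X j)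

variable {ℓ i0}

lemma eval_subst (u : Fin n → F) (P : MvPolynomial (Fin n) F) :
    eval u (subst ℓ i0 P) =
      eval (Function.update u i0
        (u i0 - (coeff (Finsupp.single i0 1) ℓ)⁻¹ * eval u ℓ)) P := by
  set a := coeff (Finsupp.single i0 1) ℓ
  set u' := Function.update u i0 (u i0 - a⁻¹ * eval u ℓ)
  induction P using MvPolynomial.induction_on with
  | C c => simp [subst]
  | add p q hp hq => simp [map_add, hp, hq]
  | mul_X p i hp =>
    rw [map_mul, map_mul, hp]
    simp only [subst, aeval_X]
    rcases eq_or_ne i i0 with rfl | hne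
    · simp [u', a, Function.update_self]
    · simp [hne, u', Function.update_of_ne hne]

lemma subst_self (hl : ℓ.IsHomogeneous 1)
    (ha : coeff (Finsupp.single i0 1) ℓ ≠ 0) : subst ℓ i0 ℓ = 0 := by
  set a := coeff (Finsupp.single i0 1) ℓ with ha_def
  nth_rewrite 2 [linear_decomp hl]
  rw [map_sum]
  have hterm : ∀ j : Fin n, subst ℓ i0 (C (coeff (Finsupp.single j 1) ℓ) * X j)
      = C (coeff (Finsupp.single j 1) ℓ) * X j
        + (if j = i0 then C a * (- (C a⁻¹ * ℓ)) else 0) := by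
    intro j
    rw [map_mul]
    have hCj : subst ℓ i0 (C (coeff (Finsupp.single j 1) ℓ))
        = C (coeff (Finsupp.single j 1) ℓ) := by simp [subst]
    rw [hCj]
    simp only [subst, aeval_X]
    rcases eq_or_ne j i0 with rfl | hne
    · simp only [ite_true, ← ha_def]
      ring
    · simp [hne]
  rw [Finset.sum_congr rfl (fun j _ => hterm j), Finset.sum_add_distrib,
    Finset.sum_ite_eq' Finset.univ i0]
  simp only [Finset.mem_univ, if_pos]
  rw [← linear_decomp hl]
  have : C a * -(C a⁻¹ * ℓ) = - ℓ := by
    rw [mul_neg, ← mul_assoc, ← map_mul, mul_inv_cancel₀ ha, map_one, one_mul]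
  rw [this, add_neg_cancel]

lemma dvd_sub_subst (P : MvPolynomial (Fin n) F) :
    ℓ ∣ P - subst ℓ i0 P := by
  set I := Ideal.span {ℓ}
  have hcomp : (Ideal.Quotient.mkₐ F I).comp (subst ℓ i0) = Ideal.Quotient.mkₐ F I := by
    apply MvPolynomial.algHom_ext
    intro j
    simp only [AlgHom.comp_apply, subst, aeval_X]
    rcases eq_or_ne j i0 with rfl | hne
    · simp only [ite_true, map_sub, map_mul]
      have : Ideal.Quotient.mkₐ F I ℓ = 0 := by
        simp [Ideal.Quotient.eq_zero_iff_mem, I, Ideal.mem_span_singleton_self]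
      rw [this, mul_zero, sub_zero]
    · simp [hne]
  have : Ideal.Quotient.mkₐ F I (P - subst ℓ i0 P) = 0 := by
    rw [map_sub]
    have := DFunLike.congr_fun hcomp P
    simp only [AlgHom.comp_apply] at this
    rw [this, sub_self]
  rw [← Ideal.mem_span_singleton]
  exact (Ideal.Quotient.eq_zero_iff_mem).mp this

variable [Infinite F]

lemma subst_eq_zero (hl : ℓ.IsHomogeneous 1)
    (ha : coeff (Finsupp.single i0 1) ℓ ≠ 0) {P : MvPolynomial (Fin n) F}
    (hP : ∀ u, eval u ℓ = 0 → eval u P = 0) : subst ℓ i0 P = 0 := by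
  apply MvPolynomial.funext
  intro u
  rw [map_zero, eval_subst]
  apply hP
  have := eval_subst (ℓ := ℓ) (i0 := i0) u ℓ
  rw [subst_self hl ha, map_zero] at this
  exact this.symm

/-- main divisibility lemma -/
lemma linear_dvd_of_vanish (hl : ℓ.IsHomogeneous 1) (hl0 : ℓ ≠ 0)
    {P : MvPolynomial (Fin n) F}
    (hP : ∀ u, eval u ℓ = 0 → eval u P = 0) : ℓ ∣ P := by
  have hex : ∃ i0, coeff (Finsupp.single i0 1) ℓ ≠ 0 := by
    by_contra h
    push_neg at h
    apply hl0
    rw [linear_decomp hl]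
    simp [h]
  obtain ⟨i0, ha⟩ := hex
  have := dvd_sub_subst (ℓ := ℓ) (i0 := i0) P
  rwa [subst_eq_zero hl ha hP, sub_zero] at this

lemma linear_dvd_iff (hl : ℓ.IsHomogeneous 1)
    (ha : coeff (Finsupp.single i0 1) ℓ ≠ 0) {P : MvPolynomial (Fin n) F} :
    ℓ ∣ P ↔ subst ℓ i0 P = 0 := by
  constructor
  · rintro ⟨Q, rfl⟩
    rw [map_mul, subst_self hl ha, zero_mul]
  · intro h
    have := dvd_sub_subst (ℓ := ℓ) (i0 := i0) P
    rwa [h, sub_zero] at this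

lemma linear_prime (hl : ℓ.IsHomogeneous 1) (hl0 : ℓ ≠ 0) : Prime ℓ := by
  have hex : ∃ i0, coeff (Finsupp.single i0 1) ℓ ≠ 0 := by
    by_contra h
    push_neg at h
    apply hl0
    rw [linear_decomp hl]
    simp [h]
  obtain ⟨i0, ha⟩ := hex
  refine ⟨hl0, ?_, ?_⟩
  · intro hu
    have : IsUnit (eval (fun _ => (0:F)) ℓ) := hu.map (eval _)
    have hz : eval (fun _ => (0:F)) ℓ = 0 := by
      have h0 : (0 : Fin n →₀ ℕ).degree ≠ 1 := by simp [Finsupp.degree]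
      have hc := hl.coeff_eq_zero h0
      rw [eval_zero']
      simpa [constantCoeff_eq] using hc
    rw [hz] at this
    exact not_isUnit_zero this
  · intro p q hpq
    rw [linear_dvd_iff hl ha] at hpq ⊢
    rw [linear_dvd_iff hl ha (P := q)]
    rw [map_mul] at hpq
    exact mul_eq_zero.mp hpq

end Subst



variable {n : ℕ}

lemma homog_component_zero {A D G : MvPolynomial (Fin n) F} {na m : ℕ}
    (hA : A.IsHomogeneous na) (hD : D.IsHomogeneous m) (hD0 : D ≠ 0)
    (h : A = D * G) : ∀ j, j + m ≠ na → homogeneousComponent j G = 0 := by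
  intro j0 hj0
  by_cases hjr : j0 ∈ Finset.range (G.totalDegree + 1)
  · have hGsum := sum_homogeneousComponent G
    have hAsum : A = ∑ j ∈ Finset.range (G.totalDegree + 1),
        D * homogeneousComponent j G := by
      rw [← Finset.mul_sum, hGsum, h]
    have hcomp : homogeneousComponent (j0 + m) A = D * homogeneousComponent j0 G := by
      rw [hAsum, map_sum]
      have hterm : ∀ j ∈ Finset.range (G.totalDegree + 1),
          homogeneousComponent (j0 + m) (D * homogeneousComponent j G)
            = if j = j0 then D * homogeneousComponent j0 G else 0 := by
        intro j _
        have hhom : (D * homogeneousComponent j G).IsHomogeneous (m + j) :=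
          hD.mul (homogeneousComponent_isHomogeneous j G)
        rw [homogeneousComponent_of_mem ((mem_homogeneousSubmodule _ _).mpr hhom)]
        by_cases hjj : j = j0
        · subst hjj; rw [if_pos (Nat.add_comm _ _), if_pos rfl]
        · rw [if_neg (show ¬ j0 + m = m + j by omega), if_neg hjj]
      rw [Finset.sum_congr rfl hterm, Finset.sum_ite_eq' _ j0, if_pos hjr]
    have hA0 : homogeneousComponent (j0 + m) A = 0 := by
      rw [homogeneousComponent_of_mem ((mem_homogeneousSubmodule _ _).mpr hA),
        if_neg hj0]
    rw [hA0] at hcomp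
    rcases mul_eq_zero.mp hcomp.symm with h' | h'
    · exact absurd h' hD0
    · exact h'
  · exact homogeneousComponent_eq_zero j0 G (by simpa using hjr)

lemma homog_quot {A D G : MvPolynomial (Fin n) F} {na m k : ℕ}
    (hA : A.IsHomogeneous na) (hD : D.IsHomogeneous m) (hD0 : D ≠ 0)
    (h : A = D * G) (hk : k + m = na) : G.IsHomogeneous k := by
  have hzero := homog_component_zero hA hD hD0 h
  have hGsum := (sum_homogeneousComponent G).symm
  rw [hGsum]
  apply MvPolynomial.IsHomogeneous.sum
  intro j hj
  by_cases hjk : j = k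
  · subst hjk; exact homogeneousComponent_isHomogeneous j G
  · rw [hzero j (by omega)]
    exact isHomogeneous_zero _ _ _

lemma homog_quot_zero {A D G : MvPolynomial (Fin n) F} {na m : ℕ}
    (hA : A.IsHomogeneous na) (hD : D.IsHomogeneous m) (hD0 : D ≠ 0)
    (h : A = D * G) (hk : na < m) : A = 0 := by
  have hzero := homog_component_zero hA hD hD0 h
  have hG : G = 0 := by
    rw [← sum_homogeneousComponent G]
    apply Finset.sum_eq_zero
    intro j _
    exact hzero j (by omega)
  rw [h, hG, mul_zero]

lemma eq_C_of_homog_zero {G : MvPolynomial (Fin n) F}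
    (hG : G.IsHomogeneous 0) : G = C (coeff 0 G) := by
  have := homogeneousComponent_of_mem ((mem_homogeneousSubmodule _ _).mpr hG)
    (m := 0)
  rw [if_pos rfl] at this
  conv_rhs => rw [← homogeneousComponent_zero]
  exact this.symm

/-- Euler's identity -/
lemma euler {φ : MvPolynomial (Fin n) F} {m : ℕ} (hφ : φ.IsHomogeneous m) :
    ∑ i : Fin n, X i * pderiv i φ = m • φ := by
  nth_rewrite 2 [as_sum φ]
  rw [Finset.smul_sum]
  have : ∀ i : Fin n, pderiv i φ
      = ∑ mm ∈ φ.support, pderiv i (monomial mm (coeff mm φ)) := by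
    intro i; rw [← map_sum, ← as_sum φ]
  rw [Finset.sum_congr rfl (fun i _ => by rw [this i, Finset.mul_sum]),
    Finset.sum_comm]
  apply Finset.sum_congr rfl
  intro mm hmm
  have hdeg : mm.degree = m := by
    rw [Finsupp.degree_eq_weight_one]; exact hφ (Finsupp.mem_support_iff.mp hmm)
  have hterm : ∀ i : Fin n, X i * pderiv i (monomial mm (coeff mm φ))
      = monomial mm (coeff mm φ * mm i) := by
    intro i
    rw [pderiv_monomial, X, monomial_mul, one_mul]
    by_cases hmi : mm i = 0
    · rw [hmi, Nat.cast_zero, mul_zero, map_zero, map_zero]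
    · have hmm' : Finsupp.single i 1 + (mm - Finsupp.single i 1) = mm := by
        ext j
        rcases eq_or_ne j i with rfl | hij
        · simp only [Finsupp.add_apply, Finsupp.tsub_apply, Finsupp.single_eq_same]
          omega
        · simp only [Finsupp.add_apply, Finsupp.tsub_apply,
            Finsupp.single_apply, Ne.symm hij, if_false]
          omega
      rw [hmm']
  rw [Finset.sum_congr rfl (fun i _ => hterm i), ← map_sum (monomial mm), ← Finset.mul_sum]
  have hsum : ∑ i : Fin n, mm i = m := by
    rw [← hdeg, Finsupp.degree]
    exact (Finset.sum_subset (Finset.subset_univ _)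
      (fun x _ hx => Finsupp.notMem_support_iff.mp hx)).symm
  rw [← Nat.cast_sum, hsum, smul_monomial, nsmul_eq_mul, mul_comm]

lemma eval_smul_homog {φ : MvPolynomial (Fin n) F} {m : ℕ} (hφ : φ.IsHomogeneous m)
    (c : F) (w : Fin n → F) : eval (c • w) φ = c ^ m * eval w φ := by
  conv_lhs => rw [as_sum φ]
  conv_rhs => rw [as_sum φ]
  rw [map_sum, map_sum, Finset.mul_sum]
  apply Finset.sum_congr rfl
  intro mm hmm
  have hdeg : mm.degree = m := by
    rw [Finsupp.degree_eq_weight_one]; exact hφ (Finsupp.mem_support_iff.mp hmm)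
  rw [eval_monomial, eval_monomial]
  rw [Finsupp.prod, Finsupp.prod]
  have : ∀ i ∈ mm.support, (c • w) i ^ mm i = c ^ mm i * w i ^ mm i := by
    intro i _
    rw [Pi.smul_apply, smul_eq_mul, mul_pow]
  rw [Finset.prod_congr rfl this, Finset.prod_mul_distrib, Finset.prod_pow_eq_pow_sum]
  have : ∑ i ∈ mm.support, mm i = m := by rw [← hdeg, Finsupp.degree_apply]
  rw [this]
  ring

lemma prod_dvd {R : Type*} [CommRing R] [IsDomain R] {ι : Type*} (s : Finset ι)
    (p : ι → R) (F : R) (hp : ∀ i ∈ s, Prime (p i)) (hdvd : ∀ i ∈ s, p i ∣ F)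
    (hnd : ∀ i ∈ s, ∀ j ∈ s, i ≠ j → ¬ p i ∣ p j) : (∏ i ∈ s, p i) ∣ F := by
  classical
  induction s using Finset.induction_on with
  | empty => simpa using one_dvd F
  | @insert a s ha ih =>
    rw [Finset.prod_insert ha]
    obtain ⟨G, hG⟩ := ih (fun i hi => hp i (Finset.mem_insert_of_mem hi))
      (fun i hi => hdvd i (Finset.mem_insert_of_mem hi))
      (fun i hi j hj hij => hnd i (Finset.mem_insert_of_mem hi) j
        (Finset.mem_insert_of_mem hj) hij)
    have hpa := hp a (Finset.mem_insert_self a s)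
    have hadvd : p a ∣ (∏ i ∈ s, p i) * G := hG ▸ hdvd a (Finset.mem_insert_self a s)
    have hnot : ¬ p a ∣ ∏ i ∈ s, p i := by
      intro hdvd'
      obtain ⟨j, hj, hdj⟩ := hpa.exists_mem_finset_dvd hdvd'
      exact hnd a (Finset.mem_insert_self a s) j (Finset.mem_insert_of_mem hj)
        (fun h => ha (h ▸ hj)) hdj
    rcases hpa.dvd_or_dvd hadvd with h' | h'
    · exact absurd h' hnot
    · obtain ⟨G', hG'⟩ := h'
      exact ⟨G', by rw [hG, hG', mul_assoc, mul_left_comm]⟩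

end NoetherAux

end NoetherAuxSection

/-- **Max Noether relation, degree `d`.** If `L` meets the nonsingular
degree-`d ≥ 3` curve `C` transversally at the `d` points `[v 1],…,[v d]`, avoiding points
of multiplicity `d` of `C`, and `H_j` is the tangent line of `C` at `[v j]`, then
`H₁⋯H_d = a·C + B·L²` with `a ≠ 0` a constant and `B` homogeneous of degree `d - 2`. -/
theorem noether_relation_curve [IsAlgClosed K]
    (d : ℕ) (hd : 3 ≤ d) (L Cd : MvPolynomial (Fin 3) K)
    (hL : L.IsHomogeneous 1) (hL0 : L ≠ 0)
    (hC : Cd.IsHomogeneous d) (hCns : Nonsingular Cd)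
    (htr : Transversal L Cd) (hmult : TangentMeetsElsewhere L Cd)
    (v : Fin d → (Fin 3 → K)) (hv0 : ∀ j, v j ≠ 0)
    (hvL : ∀ j, MvPolynomial.eval (v j) L = 0)
    (hvC : ∀ j, MvPolynomial.eval (v j) Cd = 0)
    (hdist : ∀ j k, j ≠ k → ¬ ∃ c : K, v j = c • v k)
    (hall : ∀ u : Fin 3 → K, u ≠ 0 → MvPolynomial.eval u L = 0 →
      MvPolynomial.eval u Cd = 0 → ∃ j, ∃ c : K, u = c • v j) :
    ∃ a : K, a ≠ 0 ∧ ∃ B : MvPolynomial (Fin 3) K, B.IsHomogeneous (d - 2) ∧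
      ∏ j, tangentPoly Cd (v j) = MvPolynomial.C a * Cd + B * L ^ 2 := by
  classical
  -- ## Step 0: basic facts about the tangent lines
  have hHhom : ∀ j, (tangentPoly Cd (v j)).IsHomogeneous 1 := by
    intro j
    rw [tangentPoly]
    exact IsHomogeneous.sum _ _ _ (fun i _ => isHomogeneous_C_mul_X _ _)
  have hpderivH : ∀ (j : Fin d) (i : Fin 3),
      pderiv i (tangentPoly Cd (v j)) = C (eval (v j) (pderiv i Cd)) := by
    intro j i
    rw [tangentPoly, map_sum, Finset.sum_eq_single i]
    · rw [pderiv_C_mul, pderiv_X, Pi.single_eq_same, mul_one]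
    · intro k _ hk
      rw [pderiv_C_mul, pderiv_X, Pi.single_eq_of_ne hk, mul_zero]
    · intro h; exact absurd (Finset.mem_univ i) h
  have hHv : ∀ j, eval (v j) (tangentPoly Cd (v j)) = 0 := by
    intro j
    have he : eval (v j) (∑ i : Fin 3, X i * pderiv i Cd) = 0 := by
      rw [NoetherAux.euler hC, map_nsmul, hvC j, smul_zero]
    rw [tangentPoly, map_sum, ← he, map_sum]
    exact Finset.sum_congr rfl fun i _ => by
      rw [map_mul, map_mul, eval_C, eval_X]
      exact mul_comm _ _
  -- ## Step 1: linear independence helper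
  have hind : ∀ (j : Fin d) (α β : K),
      (∀ i, α * eval (v j) (pderiv i L) + β * eval (v j) (pderiv i Cd) = 0) →
      α = 0 ∧ β = 0 := by
    intro j α β hrel
    have hli := htr (v j) (hv0 j) (hvL j) (hvC j)
    rw [Fintype.linearIndependent_iff] at hli
    have h0 := hli ![α, β] ?_
    · exact ⟨h0 0, h0 1⟩
    · rw [Fin.sum_univ_two]
      funext i
      simp only [Matrix.cons_val_zero, Matrix.cons_val_one, Matrix.head_cons,
        Pi.add_apply, Pi.smul_apply, smul_eq_mul, Pi.zero_apply, grad]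
      exact hrel i
  have hLndvd : ∀ (W Q : MvPolynomial (Fin 3) K) (j : Fin d),
      (∀ i, eval (v j) (pderiv i W) = eval (v j) (pderiv i Cd)) → W ≠ L * Q := by
    intro W Q j hW hWQ
    have hdep : ∀ i, eval (v j) Q * eval (v j) (pderiv i L)
        + (-1) * eval (v j) (pderiv i Cd) = 0 := by
      intro i
      rw [← hW i, hWQ, pderiv_mul, map_add, map_mul, map_mul, hvL j, zero_mul]
      ring
    have h2 := (hind j _ _ hdep).2
    norm_num at h2
  have hLH : ∀ j, ¬ L ∣ tangentPoly Cd (v j) := by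
    rintro j ⟨Q, hQ⟩
    exact hLndvd (tangentPoly Cd (v j)) Q j
      (fun i => by rw [hpderivH j i, eval_C]) hQ
  have hLC : ¬ L ∣ Cd := by
    rintro ⟨Q, hQ⟩
    exact hLndvd Cd Q ⟨0, by omega⟩ (fun i => rfl) hQ
  -- ## Step 2: coordinates on the line
  obtain ⟨c, hcdef⟩ : ∃ c : Fin 3 → K, ∀ i, c i = coeff (Finsupp.single i 1) L :=
    ⟨_, fun i => rfl⟩
  have hLdec : L = ∑ i : Fin 3, C (c i) * X i := by
    simp_rw [hcdef]; exact NoetherAux.linear_decomp hL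
  obtain ⟨i0, hc0⟩ : ∃ i0, c i0 ≠ 0 := by
    by_contra h
    push_neg at h
    exact hL0 (by rw [hLdec]; simp [h])
  have hfin := (by decide : ∀ i : Fin 3, i + 1 ≠ i ∧ i + 2 ≠ i ∧ i + 1 ≠ i + 2) i0
  have hcases : ∀ k : Fin 3, k = i0 ∨ k = i0 + 1 ∨ k = i0 + 2 :=
    fun k => (by decide : ∀ i k : Fin 3, k = i ∨ k = i + 1 ∨ k = i + 2) i0 k
  obtain ⟨j1, hj1⟩ : ∃ j1, j1 = i0 + 1 := ⟨_, rfl⟩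
  obtain ⟨j2, hj2⟩ : ∃ j2, j2 = i0 + 2 := ⟨_, rfl⟩
  have hne1 : j1 ≠ i0 := hj1 ▸ hfin.1
  have hne2 : j2 ≠ i0 := hj2 ▸ hfin.2.1
  have hne12 : j1 ≠ j2 := hj1 ▸ hj2 ▸ hfin.2.2
  have hcases' : ∀ k : Fin 3, k = i0 ∨ k = j1 ∨ k = j2 := by
    rw [hj1, hj2]; exact hcases
  have hsum3 : ∀ (g : Fin 3 → K), ∑ k, g k = g i0 + g j1 + g j2 := by
    intro g
    rw [hj1, hj2]
    exact (by intro i g; fin_cases i <;> simp [Fin.sum_univ_three] <;> ring :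
      ∀ (i : Fin 3) (g : Fin 3 → K), ∑ k, g k = g i + g (i+1) + g (i+2)) i0 g
  have hevalL : ∀ u : Fin 3 → K, eval u L = c i0 * u i0 + c j1 * u j1 + c j2 * u j2 := by
    intro u
    rw [hLdec, map_sum,
      Finset.sum_congr rfl fun k _ => by rw [map_mul, eval_C, eval_X]]
    exact hsum3 (fun k => c k * u k)
  obtain ⟨e, he1, he2, he0⟩ : ∃ e : Fin 3 → K,
      e j1 = 1 ∧ e j2 = 0 ∧ e i0 = -(c i0)⁻¹ * c j1 := by
    refine ⟨fun i => if i = j1 then 1 else if i = i0 then -(c i0)⁻¹ * c j1 else 0, ?_, ?_, ?_⟩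
    · simp
    · simp [Ne.symm hne12, hne12, hne2]
    · simp [Ne.symm hne1, hne1]
  obtain ⟨f, hf2, hf1, hf0⟩ : ∃ f : Fin 3 → K,
      f j2 = 1 ∧ f j1 = 0 ∧ f i0 = -(c i0)⁻¹ * c j2 := by
    refine ⟨fun i => if i = j2 then 1 else if i = i0 then -(c i0)⁻¹ * c j2 else 0, ?_, ?_, ?_⟩
    · simp
    · simp [hne12, hne1]
    · simp [Ne.symm hne2, hne2]
  have hker : ∀ u : Fin 3 → K, eval u L = 0 → ∀ i, u i = u j1 * e i + u j2 * f i := by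
    intro u hu i
    rw [hevalL] at hu
    rcases hcases' i with hi | hi | hi
    · rw [hi, he0, hf0]
      apply mul_left_cancel₀ hc0
      have h1 : c i0 * u i0 = -(c j1 * u j1) - c j2 * u j2 := by linear_combination hu
      rw [h1]
      field_simp
      ring
    · rw [hi, he1, hf1]; ring
    · rw [hi, he2, hf2]; ring
  -- ## Step 3: the restriction map τ to the line
  obtain ⟨τ, hτdef⟩ : ∃ τ : MvPolynomial (Fin 3) K →ₐ[K] MvPolynomial (Fin 2) K,
      τ = aeval (fun i => C (e i) * X 0 + C (f i) * X 1) := ⟨_, rfl⟩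
  have hevalτ : ∀ (Q : MvPolynomial (Fin 3) K) (wv : Fin 2 → K),
      eval wv (τ Q) = eval (fun i => e i * wv 0 + f i * wv 1) Q := by
    intro Q wv
    induction Q using MvPolynomial.induction_on with
    | C a => rw [hτdef]; simp
    | add p q hp hq => rw [map_add, map_add, map_add, hp, hq]
    | mul_X p i hp =>
      rw [map_mul, map_mul, map_mul, hp, hτdef]
      simp
  have hτhom : ∀ (Q : MvPolynomial (Fin 3) K) (m : ℕ),
      Q.IsHomogeneous m → (τ Q).IsHomogeneous m := by
    intro Q m h
    have := h.aeval (fun i => C (e i) * X 0 + C (f i) * X 1 :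
        Fin 3 → MvPolynomial (Fin 2) K)
      (fun i => (isHomogeneous_C_mul_X _ _).add (isHomogeneous_C_mul_X _ _))
    rw [one_mul] at this
    rw [hτdef]
    exact this
  have hτzero : ∀ Q : MvPolynomial (Fin 3) K, τ Q = 0 → L ∣ Q := by
    intro Q h
    apply NoetherAux.linear_dvd_of_vanish hL hL0
    intro u hu
    have h2 := congrArg (eval ![u j1, u j2]) h
    rw [map_zero, hevalτ] at h2
    have hu' : u = fun i => e i * (![u j1, u j2] : Fin 2 → K) 0
        + f i * (![u j1, u j2] : Fin 2 → K) 1 := by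
      funext i
      rw [Matrix.cons_val_zero, Matrix.cons_val_one, Matrix.cons_val_zero]
      linear_combination hker u hu i
    rw [hu']
    exact h2
  have hτL : τ L = 0 := by
    apply MvPolynomial.funext
    intro x
    rw [map_zero, hevalτ, hevalL]
    simp only [he0, he1, he2, hf0, hf1, hf2]
    field_simp
    ring
  have hτdvd : ∀ Q : MvPolynomial (Fin 3) K, L ∣ Q → τ Q = 0 := by
    rintro Q ⟨R, rfl⟩
    rw [map_mul, hτL, zero_mul]
  -- ## Step 4: the restricted points
  obtain ⟨wp, hwp0, hwp1⟩ : ∃ wp : Fin d → Fin 2 → K,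
      (∀ j, wp j 0 = v j j1) ∧ (∀ j, wp j 1 = v j j2) :=
    ⟨fun j => ![v j j1, v j j2], fun j => rfl, fun j => rfl⟩
  have hwe : ∀ j, (fun i => e i * wp j 0 + f i * wp j 1) = v j := by
    intro j; funext i
    rw [hwp0, hwp1]
    linear_combination -(hker (v j) (hvL j) i)
  have hevalw : ∀ (j : Fin d) (Q : MvPolynomial (Fin 3) K),
      eval (wp j) (τ Q) = eval (v j) Q := by
    intro j Q; rw [hevalτ, hwe j]
  have hw0 : ∀ j, ¬ (wp j 0 = 0 ∧ wp j 1 = 0) := by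
    rintro j ⟨h0, h1⟩
    apply hv0 j
    funext i
    rw [hwp0] at h0
    rw [hwp1] at h1
    rw [Pi.zero_apply, hker (v j) (hvL j) i, h0, h1, zero_mul, zero_mul, add_zero]
  -- ## Step 5: the linear forms at the restricted points
  obtain ⟨lin, hlin⟩ : ∃ lin : Fin d → MvPolynomial (Fin 2) K,
      ∀ j, lin j = C (wp j 1) * X 0 - C (wp j 0) * X 1 := ⟨_, fun j => rfl⟩
  have hlinhom : ∀ j, (lin j).IsHomogeneous 1 := by
    intro j
    rw [hlin j]
    exact (isHomogeneous_C_mul_X _ _).sub (isHomogeneous_C_mul_X _ _)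
  have hlineval : ∀ (j : Fin d) (u : Fin 2 → K),
      eval u (lin j) = wp j 1 * u 0 - wp j 0 * u 1 := by
    intro j u
    rw [hlin j, map_sub, map_mul, map_mul, eval_C, eval_C, eval_X, eval_X]
  have hlin0 : ∀ j, lin j ≠ 0 := by
    intro j h
    apply hw0 j
    constructor
    · have h2 := congrArg (eval ![0, -1]) h
      rw [hlineval, map_zero] at h2
      simpa using h2
    · have h2 := congrArg (eval ![1, 0]) h
      rw [hlineval, map_zero] at h2
      simpa using h2
  have hlinvan : ∀ (j : Fin d) (u : Fin 2 → K),
      eval u (lin j) = 0 → ∃ cc : K, u = cc • wp j := by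
    intro j u hu
    rw [hlineval] at hu
    have hfin2 : ∀ z : Fin 2, z = 0 ∨ z = 1 := by decide
    by_cases h0 : wp j 0 = 0
    · have h1 : wp j 1 ≠ 0 := fun h1 => hw0 j ⟨h0, h1⟩
      have hu0 : u 0 = 0 := by
        rw [h0, zero_mul, sub_zero] at hu
        exact (mul_eq_zero.mp hu).resolve_left h1
      have key0 : u 0 = (u 1 / wp j 1) * wp j 0 := by rw [h0, mul_zero]; exact hu0
      have key1 : u 1 = (u 1 / wp j 1) * wp j 1 := by field_simp
      refine ⟨u 1 / wp j 1, funext fun i2 => ?_⟩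
      rcases hfin2 i2 with hz | hz
      · rw [hz, Pi.smul_apply, smul_eq_mul]; exact key0
      · rw [hz, Pi.smul_apply, smul_eq_mul]; exact key1
    · have key0 : u 0 = (u 0 / wp j 0) * wp j 0 := by field_simp
      have key1 : u 1 = (u 0 / wp j 0) * wp j 1 := by
        field_simp
        linear_combination -hu
      refine ⟨u 0 / wp j 0, funext fun i2 => ?_⟩
      rcases hfin2 i2 with hz | hz
      · rw [hz, Pi.smul_apply, smul_eq_mul]; exact key0
      · rw [hz, Pi.smul_apply, smul_eq_mul]; exact key1
  have hlindvd : ∀ (j : Fin d) (Fp : MvPolynomial (Fin 2) K) (m : ℕ),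
      Fp.IsHomogeneous m → eval (wp j) Fp = 0 → lin j ∣ Fp := by
    intro j Fp m hFp hFw
    apply NoetherAux.linear_dvd_of_vanish (hlinhom j) (hlin0 j)
    intro u hu
    obtain ⟨cc, rfl⟩ := hlinvan j u hu
    rw [NoetherAux.eval_smul_homog hFp, hFw, mul_zero]
  have hlinprime : ∀ j, Prime (lin j) :=
    fun j => NoetherAux.linear_prime (hlinhom j) (hlin0 j)
  have hlinnd : ∀ j k, j ≠ k → ¬ lin j ∣ lin k := by
    rintro j k hjk ⟨G, hG⟩
    have hGhom : G.IsHomogeneous 0 :=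
      NoetherAux.homog_quot (hlinhom k) (hlinhom j) (hlin0 j) hG (by omega)
    have hGC := NoetherAux.eq_C_of_homog_zero hGhom
    rw [hGC] at hG
    have h1 : wp k 1 = coeff 0 G * wp j 1 := by
      have h2 := congrArg (eval ![1, 0]) hG
      rw [hlineval, map_mul, hlineval, eval_C] at h2
      simpa [mul_comm] using h2
    have h0 : wp k 0 = coeff 0 G * wp j 0 := by
      have h2 := congrArg (eval ![0, -1]) hG
      rw [hlineval, map_mul, hlineval, eval_C] at h2
      simp at h2
      linear_combination h2
    apply hdist k j (Ne.symm hjk)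
    refine ⟨coeff 0 G, funext fun i => ?_⟩
    rw [Pi.smul_apply, smul_eq_mul, hker (v k) (hvL k) i, hker (v j) (hvL j) i,
      ← hwp0, ← hwp1, ← hwp0, ← hwp1, h0, h1]
    ring
  -- ## Step 6: factor the restriction of Cd
  have hτCd0 : τ Cd ≠ 0 := fun h => hLC (hτzero Cd h)
  have hτCdhom : (τ Cd).IsHomogeneous d := hτhom Cd d hC
  have hprodhom : (∏ j, lin j).IsHomogeneous d := by
    have := IsHomogeneous.prod Finset.univ lin (fun _ => 1) (fun j _ => hlinhom j)
    simpa using this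
  have hprod0 : (∏ j, lin j) ≠ 0 := Finset.prod_ne_zero_iff.mpr (fun j _ => hlin0 j)
  obtain ⟨G, hG⟩ := NoetherAux.prod_dvd Finset.univ lin (τ Cd)
    (fun j _ => hlinprime j)
    (fun j _ => hlindvd j (τ Cd) d hτCdhom (by rw [hevalw j Cd]; exact hvC j))
    (fun j _ k _ hjk => hlinnd j k hjk)
  have hGhom : G.IsHomogeneous 0 :=
    NoetherAux.homog_quot hτCdhom hprodhom hprod0 hG (by omega)
  have hGC := NoetherAux.eq_C_of_homog_zero hGhom
  have hcc0 : coeff 0 G ≠ 0 := by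
    intro h
    apply hτCd0
    rw [hG, hGC, h, map_zero, mul_zero]
  -- ## Step 7: factor the restrictions of the tangent lines
  have hFH : ∀ j, ∃ lam : K, lam ≠ 0 ∧ τ (tangentPoly Cd (v j)) = C lam * lin j := by
    intro j
    have hHne : τ (tangentPoly Cd (v j)) ≠ 0 := fun h => hLH j (hτzero _ h)
    have hHhom' : (τ (tangentPoly Cd (v j))).IsHomogeneous 1 := hτhom _ 1 (hHhom j)
    obtain ⟨G1, hG1⟩ := hlindvd j _ 1 hHhom' (by rw [hevalw]; exact hHv j)
    have hG1hom : G1.IsHomogeneous 0 :=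
      NoetherAux.homog_quot hHhom' (hlinhom j) (hlin0 j) hG1 (by omega)
    have hG1C := NoetherAux.eq_C_of_homog_zero hG1hom
    refine ⟨coeff 0 G1, fun h => hHne ?_, by
      rw [hG1]; nth_rewrite 1 [hG1C]; rw [mul_comm]⟩
    rw [hG1, hG1C, h, map_zero, mul_zero]
  choose lam hlam0 hlamEq using hFH
  have hτP : τ (∏ j, tangentPoly Cd (v j)) = C (∏ j, lam j) * ∏ j, lin j := by
    rw [map_prod, Finset.prod_congr rfl (fun j _ => hlamEq j),
      Finset.prod_mul_distrib, map_prod]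
  -- ## Step 8: the constant a and the first division
  obtain ⟨aK, haKdef⟩ : ∃ aK : K, aK = (∏ j, lam j) * (coeff 0 G)⁻¹ := ⟨_, rfl⟩
  have haK0 : aK ≠ 0 := by
    rw [haKdef]
    exact mul_ne_zero (Finset.prod_ne_zero_iff.mpr fun j _ => hlam0 j) (inv_ne_zero hcc0)
  have hkey : τ (∏ j, tangentPoly Cd (v j) - C aK * Cd) = 0 := by
    rw [map_sub, map_mul, hτP, hG, hGC]
    have hτC : τ (C aK) = C aK := by rw [hτdef]; simp
    rw [hτC]
    have h2 : C (∏ j, lam j) * ∏ j, lin j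
        - C aK * ((∏ j, lin j) * C (coeff 0 G))
        = (C ((∏ j, lam j) - aK * coeff 0 G)) * ∏ j, lin j := by
      rw [map_sub, map_mul]; ring
    have h3 : (∏ j, lam j) - aK * coeff 0 G = 0 := by
      rw [haKdef, mul_assoc, inv_mul_cancel₀ hcc0, mul_one, sub_self]
    rw [h2, h3, map_zero, zero_mul]
  obtain ⟨M, hM⟩ := hτzero _ hkey
  have hPhom : (∏ j, tangentPoly Cd (v j)).IsHomogeneous d := by
    have := IsHomogeneous.prod Finset.univ (fun j => tangentPoly Cd (v j))
      (fun _ => 1) (fun j _ => hHhom j)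
    simpa using this
  have hAhom : (∏ j, tangentPoly Cd (v j) - C aK * Cd).IsHomogeneous d :=
    hPhom.sub (hC.C_mul aK)
  have hMhom : M.IsHomogeneous (d - 1) :=
    NoetherAux.homog_quot hAhom hL hL0 hM (by omega)
  -- ## Step 9: M vanishes at the intersection points
  have hMv : ∀ j, eval (v j) M = 0 := by
    intro j
    have hsplit : ∏ k, tangentPoly Cd (v k)
        = tangentPoly Cd (v j) * ∏ k ∈ Finset.univ.erase j, tangentPoly Cd (v k) :=
      (Finset.mul_prod_erase Finset.univ _ (Finset.mem_univ j)).symm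
    have heq : ∀ i, eval (v j) M * eval (v j) (pderiv i L)
        + (-(eval (v j) (∏ k ∈ Finset.univ.erase j, tangentPoly Cd (v k)) - aK))
          * eval (v j) (pderiv i Cd) = 0 := by
      intro i
      have h1 := congrArg (fun Q => eval (v j) (pderiv i Q)) hM
      rw [map_sub, hsplit, pderiv_mul, pderiv_C_mul, pderiv_mul (f := L) (g := M)] at h1
      simp only [map_sub, map_add, map_mul] at h1
      rw [hHv j, hvL j, hpderivH j i, eval_C] at h1
      simp only [zero_mul, mul_zero, add_zero, zero_add, eval_C] at h1
      linear_combination -h1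
    exact (hind j _ _ heq).1
  -- ## Step 10: conclude
  have hτM : τ M = 0 := by
    obtain ⟨G2, hG2⟩ := NoetherAux.prod_dvd Finset.univ lin (τ M)
      (fun j _ => hlinprime j)
      (fun j _ => hlindvd j (τ M) (d-1) (hτhom M (d-1) hMhom)
        (by rw [hevalw]; exact hMv j))
      (fun j _ k _ hjk => hlinnd j k hjk)
    exact NoetherAux.homog_quot_zero (hτhom M (d-1) hMhom) hprodhom hprod0 hG2
      (by omega)
  obtain ⟨B, hB⟩ := hτzero M hτM
  have hBhom : B.IsHomogeneous (d - 2) :=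
    NoetherAux.homog_quot hMhom hL hL0 hB (by omega)
  refine ⟨aK, haK0, B, hBhom, ?_⟩
  linear_combination hM + L * hB
end
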